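/- Let β, λ, σ > 0, r < 0 and 0 < Δ < 1 with Δ = 1 + (27r/(2σ))λ². Then f'(X₋) > 0 and f'(X₊) < 0, where X_± = (4|r|/3)/(1 ∓ √Δ); hence X₋ is an unstable and X₊ a stable equilibrium of dX/dt = f(X). -/

import Mathlib

/-!
Writing `m = λ/√(2σ)` and `X = t²`, one has `f'(X) = β (8t - 3m(9X - 4r)) / (24t)`. Both terms of the
bracket are positive, so its sign is that of the difference of their squares,
`64X - 9m²(9X - 4r)²`. At `X = (4|r|/3)/(1 + e)` with `e² = Δ = 1 + 27 r m²`, this difference is a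
positive multiple of `e (8 + 7e + e²)`, whose sign is that of `e` for `-1 < e`. The two points of the
statement are `e = √Δ` and `e = -√Δ`.
-/

noncomputable def iceDrift (β lam σ r X : ℝ) : ℝ :=
  -(β * lam / Real.sqrt (2 * σ)) * ((3 / 4) * X ^ ((3:ℝ)/2) - r * X ^ ((1:ℝ)/2))
    + (1 / 3) * β * X

open Real

lemma sign_sub_eq_sign_sq_sub_sq {α : Type*} [CommRing α] [LinearOrder α] [IsStrictOrderedRing α]
    {a b : α} (h : 0 < a + b) : SignType.sign (a - b) = SignType.sign (a ^ 2 - b ^ 2) := by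
  rw [show a ^ 2 - b ^ 2 = (a - b) * (a + b) by ring, sign_mul, sign_pos h, mul_one]

lemma sign_mul_of_pos {α : Type*} [Ring α] [LinearOrder α] [IsStrictOrderedRing α]
    {c : α} (hc : 0 < c) (x : α) :
    SignType.sign (c * x) = SignType.sign x := by
  rw [sign_mul, sign_pos hc, one_mul]

section iceDrift

variable {β lam σ r X : ℝ}

lemma hasDerivAt_iceDrift (hX : 0 < X) :
    HasDerivAt (iceDrift β lam σ r)
      (β / 3 - β * lam / √(2 * σ) * (9 * X - 4 * r) / (8 * √X)) X := by
  have h32 : HasDerivAt (fun x : ℝ => x ^ ((3:ℝ)/2)) ((3/2) * X ^ ((3:ℝ)/2 - 1)) X :=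
    Real.hasDerivAt_rpow_const (Or.inl hX.ne')
  have h12 : HasDerivAt (fun x : ℝ => x ^ ((1:ℝ)/2)) ((1/2) * X ^ ((1:ℝ)/2 - 1)) X :=
    Real.hasDerivAt_rpow_const (Or.inl hX.ne')
  refine ((((h32.const_mul (3/4)).sub (h12.const_mul r)).const_mul
    (-(β * lam / √(2 * σ)))).add ((hasDerivAt_id X).const_mul ((1/3) * β))).congr_deriv ?_
  have hsqrt : X ^ ((1:ℝ)/2) = √X := (sqrt_eq_rpow X).symm
  rw [show (3:ℝ)/2 - 1 = 1/2 by norm_num, show (1:ℝ)/2 - 1 = -(1/2) by norm_num,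
    rpow_neg hX.le, hsqrt]
  have ht : √X ^ 2 = X := sq_sqrt hX.le
  have ht0 : 0 < √X := sqrt_pos.mpr hX
  field_simp
  rw [ht]
  ring

lemma sign_deriv_iceDrift (hβ : 0 < β) (hlam : 0 ≤ lam) (hσ : 0 < σ) (hr : r ≤ 0) (hX : 0 < X) :
    SignType.sign (deriv (iceDrift β lam σ r) X)
      = SignType.sign (128 * σ * X - 9 * lam ^ 2 * (9 * X - 4 * r) ^ 2) := by
  have ht0 : 0 < √X := sqrt_pos.mpr hX
  have hderiv : deriv (iceDrift β lam σ r) X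
      = β / (24 * √X) * (8 * √X - 3 * (lam / √(2 * σ)) * (9 * X - 4 * r)) := by
    rw [(hasDerivAt_iceDrift hX).deriv]
    field_simp
    ring
  have hm2 : 2 * σ * (lam / √(2 * σ)) ^ 2 = lam ^ 2 := by
    rw [div_pow, sq_sqrt (by positivity)]
    field_simp
  have hbracket : 0 < 8 * √X + 3 * (lam / √(2 * σ)) * (9 * X - 4 * r) := by
    have : 0 ≤ 3 * (lam / √(2 * σ)) * (9 * X - 4 * r) := mul_nonneg (by positivity) (by linarith)
    linarith
  generalize lam / √(2 * σ) = m at hderiv hm2 hbracket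
  have hsq : 128 * σ * X - 9 * lam ^ 2 * (9 * X - 4 * r) ^ 2
      = 2 * σ * ((8 * √X) ^ 2 - (3 * m * (9 * X - 4 * r)) ^ 2) := by
    linear_combination 9 * (9 * X - 4 * r) ^ 2 * hm2 - 128 * σ * sq_sqrt hX.le
  rw [hderiv, sign_mul_of_pos (by positivity), sign_sub_eq_sign_sq_sub_sq hbracket, hsq,
    sign_mul_of_pos (by positivity)]

lemma sign_deriv_iceDrift_of_sq_eq {e : ℝ} (hβ : 0 < β) (hlam : 0 ≤ lam) (hσ : 0 < σ)
    (hr : r < 0) (he : -1 < e) (hΔ : e ^ 2 = 1 + (27 * r / (2 * σ)) * lam ^ 2) :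
    SignType.sign (deriv (iceDrift β lam σ r) ((4 * |r| / 3) / (1 + e))) = SignType.sign e := by
  have he1 : 0 < 1 + e := by linarith
  have hX : 0 < (4 * |r| / 3) / (1 + e) := by
    have := abs_pos.mpr hr.ne
    positivity
  have hlam2 : lam ^ 2 = 2 * σ * (e ^ 2 - 1) / (27 * r) := by
    have := hr.ne
    rw [hΔ]
    field_simp
    ring
  have hfactor : 128 * σ * ((4 * |r| / 3) / (1 + e))
        - 9 * lam ^ 2 * (9 * ((4 * |r| / 3) / (1 + e)) - 4 * r) ^ 2
      = (-32 * σ * r / (3 * (1 + e))) * (e * (8 + 7 * e + e ^ 2)) := by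
    rw [hlam2, abs_of_neg hr]
    field_simp
    ring
  have hcubic : 0 < 8 + 7 * e + e ^ 2 := by nlinarith
  rw [sign_deriv_iceDrift hβ hlam hσ hr.le hX, hfactor,
    sign_mul_of_pos (div_pos (by nlinarith) (by positivity)), sign_mul, sign_pos hcubic, mul_one]

end iceDrift

theorem stability_of_equilibria (β lam σ r : ℝ) (hβ : 0 < β) (hlam : 0 < lam)
    (hσ : 0 < σ) (hr : r < 0)
    (Δ : ℝ) (hΔdef : Δ = 1 + (27 * r / (2 * σ)) * lam ^ 2)
    (hΔpos : 0 < Δ) (hΔlt : Δ < 1) :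
    0 < deriv (iceDrift β lam σ r) ((4 * |r| / 3) / (1 + Real.sqrt Δ)) ∧
    deriv (iceDrift β lam σ r) ((4 * |r| / 3) / (1 - Real.sqrt Δ)) < 0 := by
  have hs0 : 0 < √Δ := sqrt_pos.mpr hΔpos
  have hs1 : √Δ < 1 := (sqrt_lt' one_pos).mpr (by linarith)
  have hsq : √Δ ^ 2 = Δ := sq_sqrt hΔpos.le
  constructor
  · rw [← sign_eq_one_iff, sign_deriv_iceDrift_of_sq_eq hβ hlam.le hσ hr (by linarith)
      (hsq.trans hΔdef), sign_pos hs0]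
  · rw [← sign_eq_neg_one_iff, sub_eq_add_neg, sign_deriv_iceDrift_of_sq_eq hβ hlam.le hσ hr
      (by linarith) (by rw [neg_sq, hsq, hΔdef]), sign_neg (neg_neg_of_pos hs0)]
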